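/- Let (Ā, B̄) be an interconnected structural system with subsystems (Ā_1, B̄_1), …, (Ā_r, B̄_r) and interconnection patterns Ē_{i,j}. Suppose there exist maximum matchings M_1, …, M_r of the state bipartite graphs B(Ā_1), …, B(Ā_r) such that: (1) for each subsystem j = 1,…,r, every non-top linked SCC of the system digraph D(Ā_j, B̄_j) consists of input vertices; and (2) the bipartite graph whose left vertices are ⋃_i U_L(M_i), whose right vertices are ⋃_i U_R(M_i), and whose edges go from a left-unmatched state vertex x_l of subsystem j to a right-unmatched state vertex x_k of subsystem i (i ≠ j) whenever (Ē_{i,j})_{k,l} = 1, admits a perfect matching. Then (Ā, B̄) is structurally controllable. -/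

import Mathlib

open Matrix

/-- Controllability matrix `[B, AB, …, A^{n-1}B]` (columns indexed by `Fin (card X) × U`). -/
def ctrbMatrix {X U : Type*} [Fintype X] [DecidableEq X]
    (A : Matrix X X ℝ) (B : Matrix X U ℝ) :
    Matrix X (Fin (Fintype.card X) × U) ℝ :=
  fun i kj => (A ^ (kj.1 : ℕ) * B) i kj.2

/-- A real pair `(A,B)` is controllable if its controllability matrix has full rank. -/
def Controllable {X U : Type*} [Fintype X] [DecidableEq X] [Fintype U]
    (A : Matrix X X ℝ) (B : Matrix X U ℝ) : Prop :=
  (ctrbMatrix A B).rank = Fintype.card X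

/-- `M` has the same sparsity pattern as the Boolean matrix `Mb`. -/
def SameSparsity {X Y : Type*} (M : Matrix X Y ℝ) (Mb : Matrix X Y Bool) : Prop :=
  ∀ i j, M i j = 0 ↔ Mb i j = false

/-- Structural controllability of a structural (Boolean) pair. -/
def StructurallyControllable {X U : Type*} [Fintype X] [DecidableEq X] [Fintype U]
    (Ab : Matrix X X Bool) (Bb : Matrix X U Bool) : Prop :=
  ∃ A : Matrix X X ℝ, ∃ B : Matrix X U ℝ,
    SameSparsity A Ab ∧ SameSparsity B Bb ∧ Controllable A B

/-- Edge relation of the system digraph `D(Ā,B̄)`. -/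
def sysDigraphRel {X U : Type*} (Ab : Matrix X X Bool) (Bb : Matrix X U Bool) :
    (X ⊕ U) → (X ⊕ U) → Prop :=
  fun v w => match v, w with
  | Sum.inl j, Sum.inl i => Ab i j = true
  | Sum.inr k, Sum.inl i => Bb i k = true
  | _, Sum.inr _ => False

/-- A state vertex is input-reachable if some input vertex has a directed path to it. -/
def InputReachable {X U : Type*} (Ab : Matrix X X Bool) (Bb : Matrix X U Bool) (x : X) : Prop :=
  ∃ u : U, Relation.ReflTransGen (sysDigraphRel Ab Bb) (Sum.inr u) (Sum.inl x)

/-- Edge relation of the system bipartite graph `B(Ā,B̄)` (left = states ⊕ inputs, right = states). -/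
def sysBipEdge {X U : Type*} (Ab : Matrix X X Bool) (Bb : Matrix X U Bool) :
    (X ⊕ U) → X → Prop :=
  fun v i => match v with
  | Sum.inl j => Ab i j = true
  | Sum.inr k => Bb i k = true

/-- Edge relation of the state bipartite graph `B(Ā)`. -/
def stateBipEdge {X : Type*} (Ab : Matrix X X Bool) : X → X → Prop :=
  fun j i => Ab i j = true

/-- A matching of a bipartite graph with edge relation `E`: a set of edges sharing no
left vertex and no right vertex. -/
def IsMatching {α β : Type*} (E : α → β → Prop) (M : Set (α × β)) : Prop :=
  (∀ e ∈ M, E e.1 e.2) ∧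
  (∀ e ∈ M, ∀ f ∈ M, e.1 = f.1 → e = f) ∧
  (∀ e ∈ M, ∀ f ∈ M, e.2 = f.2 → e = f)

/-- Right vertices belonging to no edge of `M`. -/
def rightUnmatched {α β : Type*} (M : Set (α × β)) : Set β :=
  {b | ∀ e ∈ M, e.2 ≠ b}

/-- Left vertices belonging to no edge of `M`. -/
def leftUnmatched {α β : Type*} (M : Set (α × β)) : Set α :=
  {a | ∀ e ∈ M, e.1 ≠ a}

/-- A maximum matching: a matching of the largest cardinality. -/
def IsMaxMatching {α β : Type*} (E : α → β → Prop) (M : Set (α × β)) : Prop :=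
  IsMatching E M ∧ ∀ M' : Set (α × β), IsMatching E M' → M'.ncard ≤ M.ncard

/-- `S` is a strongly connected component of the digraph with edge relation `R`. -/
def IsSCC {V : Type*} (R : V → V → Prop) (S : Set V) : Prop :=
  S.Nonempty ∧ (∀ u ∈ S, ∀ v ∈ S, Relation.ReflTransGen R u v) ∧
  ∀ w : V, (∀ u ∈ S, Relation.ReflTransGen R u w ∧ Relation.ReflTransGen R w u) → w ∈ S

/-- An SCC is non-top linked if it has no incoming edge from outside. -/
def NonTopLinked {V : Type*} (R : V → V → Prop) (S : Set V) : Prop :=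
  ∀ u v : V, R u v → v ∈ S → u ∈ S

/-- Dynamics pattern `(I_r ⊗ Ā') ∨ (Ē ⊗ H̄)` of a system of `r` similar subsystems. -/
def simA {n : ℕ} (r : ℕ) (A' H : Matrix (Fin n) (Fin n) Bool)
    (E : Matrix (Fin r) (Fin r) Bool) :
    Matrix (Fin r × Fin n) (Fin r × Fin n) Bool :=
  fun q q' => ((if q.1 = q'.1 then A' q.2 q'.2 else false) || (E q.1 q'.1 && H q.2 q'.2))

/-- Input pattern `I_r ⊗ B̄'` of a system of `r` similar subsystems. -/
def simB {n p : ℕ} (r : ℕ) (B' : Matrix (Fin n) (Fin p) Bool) :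
    Matrix (Fin r × Fin n) (Fin r × Fin p) Bool :=
  fun q k => if q.1 = k.1 then B' q.2 k.2 else false

/-- Entrywise OR of Boolean matrices. -/
def orMat {X Y : Type*} (M N : Matrix X Y Bool) : Matrix X Y Bool :=
  fun i j => M i j || N i j

/-- Dynamics pattern of an interconnected system: diagonal blocks `Ā_i`,
off-diagonal blocks `Ē_{i,j}`. -/
def interA {r : ℕ} {n : Fin r → ℕ}
    (A : ∀ i, Matrix (Fin (n i)) (Fin (n i)) Bool)
    (E : ∀ i j, Matrix (Fin (n i)) (Fin (n j)) Bool) :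
    Matrix (Σ i, Fin (n i)) (Σ i, Fin (n i)) Bool :=
  fun q q' => if h : q'.1 = q.1 then A q.1 q.2 (h ▸ q'.2) else E q.1 q'.1 q.2 q'.2

/-- Input pattern of an interconnected system: block diagonal with blocks `B̄_i`. -/
def interB {r : ℕ} {n p : Fin r → ℕ}
    (B : ∀ i, Matrix (Fin (n i)) (Fin (p i)) Bool) :
    Matrix (Σ i, Fin (n i)) (Σ i, Fin (p i)) Bool :=
  fun q k => if h : k.1 = q.1 then B q.1 q.2 (h ▸ k.2) else false

/-- Edge relation of the auxiliary bipartite graph of Lemma 3: an edge from the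
left-unmatched (w.r.t. `M j`) state vertex `x_l` of subsystem `j` to the right-unmatched
(w.r.t. `M i`) state vertex `x_k` of subsystem `i ≠ j` whenever `(Ē_{i,j})_{k,l} = 1`. -/
def crossEdge {r : ℕ} {n : Fin r → ℕ}
    (E : ∀ i j, Matrix (Fin (n i)) (Fin (n j)) Bool)
    (M : ∀ i, Set (Fin (n i) × Fin (n i))) :
    (Σ i, Fin (n i)) → (Σ i, Fin (n i)) → Prop :=
  fun l k => k.1 ≠ l.1 ∧ l.2 ∈ leftUnmatched (M l.1) ∧ k.2 ∈ rightUnmatched (M k.1) ∧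
    E k.1 l.1 k.2 l.2 = true

/-!
The subsystem matchings together with the perfect matching of the unmatched states form a cycle
cover `σ` of the interconnected state graph, and condition (1) makes every state reachable from an
input. Attaching each cycle of `σ`, at a state closest to the inputs, to its predecessor on a
shortest input path gives a forest of cycles rooted at inputs. Realize it with distinct positive
weights on the cycles and weight one on the attaching edges, and let `y` be a left eigenvector
for `λ` with `y B = 0`. A cycle on which `y` is not identically zero but into which nothing flows
must have weight `|λ|`, so there is only one; every cycle where `y` is nonzero lies on its path to
the root, and along that path `y` is nowhere zero, which contradicts `y B = 0` at the root. So
this realization passes the Hautus test, and since controllability is the non-vanishing of a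
polynomial in the entries, it perturbs to one with exactly the given pattern.
-/

open Equiv Relation

section Hautus

variable {K Q U : Type*} [Field K] [Fintype Q] [DecidableEq Q]

theorem Matrix.exists_vecMul_eq_zero_of_rank_lt {m n : Type*} [Fintype m] [Fintype n]
    (C : Matrix m n K) (h : C.rank < Fintype.card m) : ∃ y ≠ 0, y ᵥ* C = 0 := by
  have hker : LinearMap.ker Cᵀ.mulVecLin ≠ ⊥ := by
    rw [← LinearMap.ker_rangeRestrict]
    apply LinearMap.ker_ne_bot_of_finrank_lt
    rwa [Module.finrank_fintype_fun_eq_card, ← Matrix.rank, Matrix.rank_transpose]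
  obtain ⟨y, hy, hy0⟩ := Submodule.exists_mem_ne_zero_of_ne_bot hker
  exact ⟨y, hy0, by rwa [LinearMap.mem_ker, Matrix.mulVecLin_apply, Matrix.mulVec_transpose] at hy⟩

/-- By Cayley–Hamilton, `A ^ k` is a combination of the powers below `card Q`. -/
theorem vecMul_pow_mul_eq_zero_of_lt_card (A : Matrix Q Q K) (B : Matrix Q U K) {y : Q → K}
    (h : ∀ k < Fintype.card Q, y ᵥ* (A ^ k * B) = 0) (k : ℕ) : y ᵥ* (A ^ k * B) = 0 := by
  cases isEmpty_or_nonempty Q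
  · rw [Subsingleton.elim y 0, zero_vecMul]
  have hdeg : (Polynomial.X ^ k %ₘ A.charpoly).natDegree < Fintype.card Q := by
    rw [← A.charpoly_natDegree_eq_dim]
    refine Polynomial.natDegree_modByMonic_lt _ A.charpoly_monic fun h1 => ?_
    have := A.charpoly_natDegree_eq_dim
    rw [h1, Polynomial.natDegree_one] at this
    exact Fintype.card_ne_zero this.symm
  rw [A.pow_eq_aeval_mod_charpoly, Polynomial.aeval_eq_sum_range' hdeg, Matrix.sum_mul,
    vecMul_sum]
  refine Finset.sum_eq_zero fun i hi => ?_
  rw [smul_mul, vecMul_smul, h i (Finset.mem_range.mp hi), smul_zero]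

theorem exists_left_eigenvector_of_vecMul_pow_mul_eq_zero [IsAlgClosed K] (A : Matrix Q Q K)
    (B : Matrix Q U K) {y : Q → K} (hy : y ≠ 0) (h : ∀ k, y ᵥ* (A ^ k * B) = 0) :
    ∃ (lam : K) (z : Q → K), z ≠ 0 ∧ z ᵥ* A = lam • z ∧ z ᵥ* B = 0 := by
  let Y : Submodule K (Q → K) := ⨅ k : ℕ, LinearMap.ker (A ^ k * B).vecMulLinear
  have mem_Y {z : Q → K} : z ∈ Y ↔ ∀ k, z ᵥ* (A ^ k * B) = 0 := by
    simp [Y, Submodule.mem_iInf]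
  have hmaps : ∀ z ∈ Y, A.vecMulLinear z ∈ Y := fun z hz => mem_Y.mpr fun k => by
    rw [vecMulLinear_apply, vecMul_vecMul, ← Matrix.mul_assoc, ← pow_succ']
    exact mem_Y.mp hz (k + 1)
  have : Nontrivial Y := Submodule.nontrivial_iff_ne_bot.mpr fun hbot =>
    hy ((Submodule.mem_bot K).mp (hbot ▸ mem_Y.mpr h))
  obtain ⟨lam, hlam⟩ := Module.End.exists_eigenvalue (A.vecMulLinear.restrict hmaps)
  obtain ⟨v, hv⟩ := hlam.exists_hasEigenvector
  refine ⟨lam, v, fun h0 => hv.2 (Subtype.ext h0), ?_, ?_⟩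
  · simpa using congrArg Subtype.val hv.apply_eq_smul
  · simpa using mem_Y.mp v.2 0

theorem controllable_of_left_eigenvector_eq_zero [Fintype U] (A : Matrix Q Q ℝ)
    (B : Matrix Q U ℝ)
    (h : ∀ (lam : ℂ) (z : Q → ℂ), z ᵥ* A.map (↑) = lam • z → z ᵥ* B.map (↑) = 0 → z = 0) :
    Controllable A B := by
  by_contra hc
  obtain ⟨y, hy0, hy⟩ := (ctrbMatrix A B).exists_vecMul_eq_zero_of_rank_lt
    (lt_of_le_of_ne (ctrbMatrix A B).rank_le_card_height hc)
  have hreal := vecMul_pow_mul_eq_zero_of_lt_card A B fun k hk => funext fun u => by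
    simpa [ctrbMatrix, vecMul] using congrFun hy (⟨k, hk⟩, u)
  have hcomplex (k : ℕ) :
      (Complex.ofRealHom ∘ y) ᵥ* (A.map Complex.ofRealHom ^ k * B.map Complex.ofRealHom) = 0 := by
    funext u
    rw [← Matrix.map_pow, ← Matrix.map_mul, ← RingHom.map_vecMul, hreal k]
    simp
  obtain ⟨lam, z, hz0, hzA, hzB⟩ := exists_left_eigenvector_of_vecMul_pow_mul_eq_zero _ _
    (fun h0 => hy0 (funext fun q => by simpa using congrFun h0 q)) hcomplex
  exact hz0 (h lam z hzA hzB)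

end Hautus

section Genericity

open Polynomial

variable {Q U : Type*} [Fintype Q] [DecidableEq Q] [Fintype U]

theorem Matrix.isUnit_of_rank_eq_card {K m : Type*} [Field K] [Fintype m] [DecidableEq m]
    (M : Matrix m m K) (h : M.rank = Fintype.card m) : IsUnit M := by
  have : LinearMap.range M.mulVecLin = ⊤ :=
    Submodule.eq_top_of_finrank_eq (by rwa [Module.finrank_fintype_fun_eq_card])
  exact mulVec_surjective_iff_isUnit.mp (LinearMap.range_eq_top.mp this)

theorem controllable_iff_det_ne_zero (A : Matrix Q Q ℝ) (B : Matrix Q U ℝ) :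
    Controllable A B ↔ (ctrbMatrix A B * (ctrbMatrix A B)ᵀ).det ≠ 0 := by
  rw [Controllable, ← rank_self_mul_transpose]
  exact ⟨fun h => ((isUnit_iff_isUnit_det _).mp (isUnit_of_rank_eq_card _ h)).ne_zero,
    rank_of_det_ne_zero⟩

theorem exists_eval_eq_det_ctrbMatrix (Ap : Matrix Q Q ℝ[X]) (Bp : Matrix Q U ℝ[X]) :
    ∃ P : ℝ[X], ∀ t, P.eval t = (ctrbMatrix (Ap.map (eval t)) (Bp.map (eval t)) *
      (ctrbMatrix (Ap.map (eval t)) (Bp.map (eval t)))ᵀ).det := by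
  let Cp : Matrix Q (Fin (Fintype.card Q) × U) ℝ[X] := fun i kj => (Ap ^ (kj.1 : ℕ) * Bp) i kj.2
  refine ⟨(Cp * Cpᵀ).det, fun t => ?_⟩
  have hC : Cp.map (evalRingHom t) = ctrbMatrix (Ap.map (eval t)) (Bp.map (eval t)) := by
    ext i kj
    simp only [ctrbMatrix, ← coe_evalRingHom, ← Matrix.map_pow, ← Matrix.map_mul]
    rfl
  rw [← coe_evalRingHom, RingHom.map_det, RingHom.mapMatrix_apply, Matrix.map_mul,
    transpose_map, hC]
  rfl

noncomputable def fillPattern {m n : Type*} (M : Matrix m n ℝ) (Mb : Matrix m n Bool) :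
    Matrix m n ℝ[X] :=
  fun i j => if M i j = 0 ∧ Mb i j = true then X else C (M i j)

theorem fillPattern_map_eval_zero {m n : Type*} (M : Matrix m n ℝ) (Mb : Matrix m n Bool) :
    (fillPattern M Mb).map (eval 0) = M := by
  ext i j
  by_cases h : M i j = 0 ∧ Mb i j = true <;> simp [fillPattern, h]

theorem sameSparsity_fillPattern_map_eval {m n : Type*} {M : Matrix m n ℝ}
    {Mb : Matrix m n Bool} (hM : ∀ i j, M i j ≠ 0 → Mb i j = true) {t : ℝ} (ht : t ≠ 0) :
    SameSparsity ((fillPattern M Mb).map (eval t)) Mb := by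
  intro i j
  by_cases h0 : M i j = 0 <;> cases hb : Mb i j <;> simp_all [fillPattern]

/-- Put `t` at the zero entries the pattern allows: controllability is the non-vanishing of a
polynomial in `t`, which holds at `t = 0`. -/
theorem structurallyControllable_of_controllable {Ab : Matrix Q Q Bool} {Bb : Matrix Q U Bool}
    {A : Matrix Q Q ℝ} {B : Matrix Q U ℝ} (hA : ∀ i j, A i j ≠ 0 → Ab i j = true)
    (hB : ∀ i k, B i k ≠ 0 → Bb i k = true) (hc : Controllable A B) :
    StructurallyControllable Ab Bb := by
  obtain ⟨P, hP⟩ := exists_eval_eq_det_ctrbMatrix (fillPattern A Ab) (fillPattern B Bb)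
  have hP0 : P.eval 0 ≠ 0 := by
    rwa [hP, fillPattern_map_eval_zero, fillPattern_map_eval_zero,
      ← controllable_iff_det_ne_zero]
  obtain ⟨t, ht⟩ : ∃ t, (X * P).eval t ≠ 0 := by
    by_contra! h
    have hXP : X * P = 0 := Polynomial.funext (by simpa using h)
    exact hP0 (by rw [(mul_eq_zero.mp hXP).resolve_left X_ne_zero, eval_zero])
  rw [eval_mul, eval_X] at ht
  exact ⟨_, _, sameSparsity_fillPattern_map_eval hA (left_ne_zero_of_mul ht),
    sameSparsity_fillPattern_map_eval hB (left_ne_zero_of_mul ht),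
    (controllable_iff_det_ne_zero _ _).mpr (hP t ▸ right_ne_zero_of_mul ht)⟩

end Genericity

section CycleRecurrence

variable {Q K : Type*} {σ : Perm Q} {y : Q → K}

theorem pow_mul_eq_pow_mul_of_recurrence [CommMonoid K] {lam c : K} {x : Q} {k : ℕ}
    (h : ∀ i < k, lam * y ((σ ^ i) x) = c * y ((σ ^ (i + 1)) x)) :
    lam ^ k * y x = c ^ k * y ((σ ^ k) x) := by
  induction k with
  | zero => simp
  | succ k ih =>
    rw [pow_succ', mul_assoc, ih fun i hi => h i (by omega), mul_left_comm, h k (by omega),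
      ← mul_assoc, ← pow_succ]

theorem norm_eq_of_cycle_recurrence [Finite Q] {y : Q → ℂ} {lam : ℂ} {c : ℝ} (hc : 0 < c)
    {x : Q} (hrec : ∀ z, σ.SameCycle x z → lam * y z = c * y (σ z)) (hx : y x ≠ 0) :
    ‖lam‖ = c ∧ ∀ z, σ.SameCycle x z → y z ≠ 0 := by
  have hiter (k : ℕ) : lam ^ k * y x = c ^ k * y ((σ ^ k) x) :=
    pow_mul_eq_pow_mul_of_recurrence fun i _ => by
      rw [pow_succ', Perm.mul_apply]
      exact hrec _ ⟨i, rfl⟩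
  have hnorm : ‖lam‖ = c := by
    have h := hiter (orderOf σ)
    rw [pow_orderOf_eq_one, Perm.one_apply] at h
    have h' := congrArg norm (mul_right_cancel₀ hx h)
    rw [norm_pow, norm_pow, Complex.norm_real, Real.norm_of_nonneg hc.le] at h'
    exact (pow_left_inj₀ (norm_nonneg _) hc.le (orderOf_pos σ).ne').mp h'
  have hlam : lam ≠ 0 := norm_pos_iff.mp (hnorm ▸ hc)
  refine ⟨hnorm, fun z hz => ?_⟩
  obtain ⟨k, rfl⟩ := hz.exists_nat_pow_eq
  exact right_ne_zero_of_mul ((hiter k).symm ▸ mul_ne_zero (pow_ne_zero k hlam) hx)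

/-- A zero of `y` on the cycle propagates forward to `p` and from there backward to `σ p`,
forcing `η = 0`. -/
theorem ne_zero_of_cycle_recurrence_add [Finite Q] [Field K] {lam c η : K} {p : Q}
    (hlam : lam ≠ 0) (hc : c ≠ 0) (hη : η ≠ 0)
    (hrec : ∀ z, σ.SameCycle p z → z ≠ p → lam * y z = c * y (σ z))
    (hp : lam * y p = c * y (σ p) + η) {z : Q} (hz : σ.SameCycle p z) : y z ≠ 0 := by
  classical
  have reach_p (x : Q) (hx : σ.SameCycle p x) : ∃ k, lam ^ k * y x = c ^ k * y p := by
    have hex : ∃ k, (σ ^ k) x = p := hx.symm.exists_nat_pow_eq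
    have hk := pow_mul_eq_pow_mul_of_recurrence (k := Nat.find hex) (lam := lam) (c := c) (y := y)
      fun i hi => by
        rw [pow_succ', Perm.mul_apply]
        exact hrec _ (hx.trans ⟨i, rfl⟩) (Nat.find_min hex hi)
    exact ⟨_, Nat.find_spec hex ▸ hk⟩
  intro hz0
  obtain ⟨k, hk⟩ := reach_p z hz
  have hp0 : y p = 0 := by simpa [hz0, hc] using hk
  obtain ⟨m, hm⟩ := reach_p (σ p) (Perm.SameCycle.refl σ p).apply_right
  have hσp : y (σ p) = 0 := by simpa [hp0, hlam] using hm
  exact hη (by simpa [hp0, hσp] using hp.symm)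

end CycleRecurrence

/-- The data of the realization `matA`, `matB` below: a weighted cycle cover whose cycles form a
forest rooted at the inputs. -/
structure CycleForest (Q U C : Type*) where
  perm : Perm Q
  cycle : Q → C
  weight : C → ℝ
  head : C → Q
  parent : C → Q ⊕ U
  rank : C → ℕ
  cycle_eq_iff : ∀ x z, cycle x = cycle z ↔ perm.SameCycle x z
  weight_pos : ∀ a, 0 < weight a
  weight_injective : Function.Injective weight
  cycle_head : ∀ a, cycle (head a) = a
  rank_lt : ∀ a z, parent a = Sum.inl z → rank (cycle z) < rank a

namespace CycleForest

section Forest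

variable {Q U C : Type*} (F : CycleForest Q U C)

def parentCycle (a : C) : C ⊕ U := Sum.map F.cycle id (F.parent a)

def AttachedTo (a b : C) : Prop := F.parentCycle a = Sum.inl b

variable {F}

theorem attachedTo_of_parent_eq {a : C} {z : Q} (h : F.parent a = Sum.inl z) :
    F.AttachedTo a (F.cycle z) := by
  simp [AttachedTo, parentCycle, h]

theorem exists_parent_eq_of_attachedTo {a b : C} (h : F.AttachedTo a b) :
    ∃ z, F.parent a = Sum.inl z ∧ F.cycle z = b := by
  unfold AttachedTo parentCycle at h
  rcases hp : F.parent a with z | u <;> rw [hp] at h <;> cases h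
  exact ⟨z, rfl, rfl⟩

theorem rank_lt_of_attachedTo {a b : C} (h : F.AttachedTo a b) : F.rank b < F.rank a := by
  obtain ⟨z, hz, rfl⟩ := exists_parent_eq_of_attachedTo h
  exact F.rank_lt a z hz

theorem rank_le_of_reflTransGen {a b : C} (h : ReflTransGen F.AttachedTo a b) :
    F.rank b ≤ F.rank a := by
  induction h with
  | refl => rfl
  | tail _ hbc ih => exact (rank_lt_of_attachedTo hbc).le.trans ih

theorem eq_of_parentCycle_eq {a₀ a b : C} (ha : ReflTransGen F.AttachedTo a₀ a)
    (hb : ReflTransGen F.AttachedTo a₀ b) (h : F.parentCycle a = F.parentCycle b) : a = b := by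
  have key {a b : C} (h : F.parentCycle a = F.parentCycle b)
      (hab : ReflTransGen F.AttachedTo a b) : a = b := by
    rcases hab.cases_head with rfl | ⟨c, hac, hcb⟩
    · rfl
    · have hbc : F.AttachedTo b c := by rwa [AttachedTo, ← h]
      exact absurd (rank_le_of_reflTransGen hcb) (rank_lt_of_attachedTo hbc).not_ge
  have hunique : Relator.RightUnique F.AttachedTo := fun _ _ _ h₁ h₂ =>
    Sum.inl.inj (h₁.symm.trans h₂)
  rcases ReflTransGen.total_of_right_unique hunique ha hb with hab | hba
  · exact key h hab
  · exact (key h.symm hba).symm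

theorem exists_root [Finite C] (a₀ : C) :
    ∃ b u, ReflTransGen F.AttachedTo a₀ b ∧ F.parent b = Sum.inr u := by
  obtain ⟨b, hb, hmin⟩ := Set.exists_min_image {b | ReflTransGen F.AttachedTo a₀ b} F.rank
    (Set.toFinite _) ⟨a₀, ReflTransGen.refl⟩
  rcases hp : F.parent b with z | u
  · have hbz := attachedTo_of_parent_eq hp
    exact absurd (hmin _ (ReflTransGen.tail hb hbz)) (rank_lt_of_attachedTo hbz).not_ge
  · exact ⟨b, u, hb, hp⟩

end Forest

section Realization

variable {Q U C : Type*} [Fintype C] [DecidableEq Q] [DecidableEq U] (F : CycleForest Q U C)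

def attachMatrix : Matrix Q (Q ⊕ U) ℝ :=
  fun x v => ∑ a, if x = F.head a ∧ F.parent a = v then 1 else 0

def matA : Matrix Q Q ℝ :=
  fun x z => (if x = F.perm z then F.weight (F.cycle z) else 0) + F.attachMatrix x (Sum.inl z)

def matB : Matrix Q U ℝ := fun x u => F.attachMatrix x (Sum.inr u)

def inflow (y : Q → ℂ) (v : Q ⊕ U) : ℂ := ∑ a, if F.parent a = v then y (F.head a) else 0

/-- The equation `y ᵥ* F.matA = lam • y`, entrywise (see `isLeftEigen_of_vecMul`). -/
def IsLeftEigen (lam : ℂ) (y : Q → ℂ) : Prop :=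
  ∀ z, lam * y z = F.weight (F.cycle z) * y (F.perm z) + F.inflow y (Sum.inl z)

theorem exists_of_attachMatrix_ne_zero {x : Q} {v : Q ⊕ U} (h : F.attachMatrix x v ≠ 0) :
    ∃ a, x = F.head a ∧ F.parent a = v := by
  obtain ⟨a, -, ha⟩ := Finset.exists_ne_zero_of_sum_ne_zero h
  exact ⟨a, (ite_ne_right_iff.mp ha).1⟩

theorem eq_or_exists_of_matA_ne_zero {x z : Q} (h : F.matA x z ≠ 0) :
    x = F.perm z ∨ ∃ a, x = F.head a ∧ F.parent a = Sum.inl z := by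
  by_cases hx : x = F.perm z
  · exact Or.inl hx
  · rw [matA, if_neg hx, zero_add] at h
    exact Or.inr (F.exists_of_attachMatrix_ne_zero h)

variable {F} {lam : ℂ} {y : Q → ℂ}

theorem inflow_eq_zero {v : Q ⊕ U} (h : ∀ a, F.parent a = v → y (F.head a) = 0) :
    F.inflow y v = 0 :=
  Finset.sum_eq_zero fun a _ => by split_ifs with ha; exacts [h a ha, rfl]

theorem inflow_eq_single {v : Q ⊕ U} {a : C} (ha : F.parent a = v)
    (h : ∀ b, F.parent b = v → y (F.head b) ≠ 0 → b = a) : F.inflow y v = y (F.head a) := by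
  rw [inflow, Finset.sum_eq_single a (fun b _ hba => ?_) (by simp), if_pos ha]
  split_ifs with hb
  · by_contra hy
    exact hba (h b hb hy)
  · rfl

variable [Fintype Q]

theorem norm_eq_weight_of_inflow_eq_zero (hy : F.IsLeftEigen lam y) {x : Q} (hx : y x ≠ 0)
    (h0 : ∀ z, F.cycle z = F.cycle x → F.inflow y (Sum.inl z) = 0) :
    ‖lam‖ = F.weight (F.cycle x) ∧ ∀ z, F.cycle z = F.cycle x → y z ≠ 0 := by
  have hrec (z : Q) (hz : F.perm.SameCycle x z) :
      lam * y z = F.weight (F.cycle x) * y (F.perm z) := by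
    have hzx := ((F.cycle_eq_iff x z).mpr hz).symm
    rw [hy z, h0 z hzx, hzx, add_zero]
  obtain ⟨hnorm, hne⟩ := norm_eq_of_cycle_recurrence (F.weight_pos _) hrec hx
  exact ⟨hnorm, fun z hz => hne z ((F.cycle_eq_iff x z).mp hz.symm)⟩

/-- Take a cycle of maximal rank on which `y` does not vanish identically: nothing flows into
it. -/
theorem exists_norm_eq_weight (hy : F.IsLeftEigen lam y) (hy0 : y ≠ 0) :
    ∃ a₀, ‖lam‖ = F.weight a₀ ∧ ∀ z, F.cycle z = a₀ → y z ≠ 0 := by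
  obtain ⟨x, hx, hmax⟩ := Set.exists_max_image {x | y x ≠ 0} (F.rank ∘ F.cycle) (Set.toFinite _)
    (Function.ne_iff.mp hy0)
  refine ⟨F.cycle x, norm_eq_weight_of_inflow_eq_zero hy hx fun z hz =>
    inflow_eq_zero fun a ha => ?_⟩
  by_contra hne
  have hlt := rank_lt_of_attachedTo (attachedTo_of_parent_eq ha)
  have hle := hmax (F.head a) hne
  simp only [Function.comp_apply, F.cycle_head, hz] at hlt hle
  omega

/-- Otherwise, among the cycles off this path on which `y` does not vanish identically, one of
maximal rank receives no inflow, and so would be a second cycle of weight `‖lam‖`. -/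
theorem reflTransGen_of_ne_zero (hy : F.IsLeftEigen lam y) {a₀ : C}
    (hres : ‖lam‖ = F.weight a₀) {x : Q} (hx : y x ≠ 0) :
    ReflTransGen F.AttachedTo a₀ (F.cycle x) := by
  by_contra hx'
  obtain ⟨x, ⟨hx, hxa⟩, hmax⟩ := Set.exists_max_image
    {x | y x ≠ 0 ∧ ¬ReflTransGen F.AttachedTo a₀ (F.cycle x)} (F.rank ∘ F.cycle)
    (Set.toFinite _) ⟨x, hx, hx'⟩
  have hchild : ∃ a, F.AttachedTo a (F.cycle x) ∧ y (F.head a) ≠ 0 := by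
    by_contra! h
    have hres' := (norm_eq_weight_of_inflow_eq_zero hy hx fun z hz =>
      inflow_eq_zero fun a ha => h a (hz ▸ attachedTo_of_parent_eq ha)).1
    exact hxa (F.weight_injective (hres.symm.trans hres') ▸ ReflTransGen.refl)
  obtain ⟨a, ha, hya⟩ := hchild
  have hanc : ReflTransGen F.AttachedTo a₀ a := by
    by_contra hna
    have := hmax (F.head a) ⟨hya, by rwa [F.cycle_head]⟩
    simp only [Function.comp_apply, F.cycle_head] at this
    exact (rank_lt_of_attachedTo ha).not_ge this
  exact hxa (hanc.tail ha)

/-- Going from `a₀` towards the root, each cycle receives inflow at a single vertex, from the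
previous cycle's head, where `y` does not vanish. -/
theorem ne_zero_of_reflTransGen (hy : F.IsLeftEigen lam y) {a₀ b : C}
    (hres : ‖lam‖ = F.weight a₀) (h₀ : ∀ z, F.cycle z = a₀ → y z ≠ 0)
    (hb : ReflTransGen F.AttachedTo a₀ b) : ∀ z, F.cycle z = b → y z ≠ 0 := by
  induction hb with
  | refl => exact h₀
  | @tail d b hd hdb ih =>
    obtain ⟨p, hp, rfl⟩ := exists_parent_eq_of_attachedTo hdb
    have only_d (a : C) (z : Q) (hz : F.cycle z = F.cycle p) (ha : F.parent a = Sum.inl z)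
        (hya : y (F.head a) ≠ 0) : a = d :=
      eq_of_parentCycle_eq (F.cycle_head a ▸ reflTransGen_of_ne_zero hy hres hya) hd
        (by simp [parentCycle, ha, hp, hz])
    have hlam : lam ≠ 0 := norm_pos_iff.mp (hres ▸ F.weight_pos a₀)
    have hw : (F.weight (F.cycle p) : ℂ) ≠ 0 := Complex.ofReal_ne_zero.mpr (F.weight_pos _).ne'
    intro z hz
    refine ne_zero_of_cycle_recurrence_add hlam hw (ih _ (F.cycle_head d)) (fun x hx hxp => ?_)
      ?_ ((F.cycle_eq_iff p z).mp hz.symm)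
    · have hxp' := ((F.cycle_eq_iff p x).mpr hx).symm
      rw [hy x, hxp', inflow_eq_zero fun a ha => not_not.mp fun hya =>
        hxp (Sum.inl.inj ((only_d a x hxp' ha hya ▸ ha).symm.trans hp)), add_zero]
    · rw [hy p, inflow_eq_single hp fun a ha hya => only_d a p rfl ha hya]

theorem eq_zero_of_isLeftEigen (hy : F.IsLeftEigen lam y)
    (hB : ∀ u, F.inflow y (Sum.inr u) = 0) : y = 0 := by
  by_contra hy0
  obtain ⟨a₀, hres, h₀⟩ := exists_norm_eq_weight hy hy0
  obtain ⟨b, u, hb, hbu⟩ := F.exists_root a₀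
  have hroot := hB u
  rw [inflow_eq_single hbu fun a ha hya => eq_of_parentCycle_eq
    (F.cycle_head a ▸ reflTransGen_of_ne_zero hy hres hya) hb (by simp [parentCycle, ha, hbu])]
    at hroot
  exact ne_zero_of_reflTransGen hy hres h₀ hb _ (F.cycle_head b) hroot

variable (F)

theorem sum_mul_attachMatrix (y : Q → ℂ) (v : Q ⊕ U) :
    ∑ x, y x * (F.attachMatrix x v : ℂ) = F.inflow y v := by
  simp only [attachMatrix, inflow, Complex.ofReal_sum, Finset.mul_sum]
  rw [Finset.sum_comm]
  refine Finset.sum_congr rfl fun a _ => ?_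
  by_cases ha : F.parent a = v <;> simp [ha, apply_ite ((↑) : ℝ → ℂ)]

theorem isLeftEigen_of_vecMul (h : y ᵥ* F.matA.map (↑) = lam • y) : F.IsLeftEigen lam y :=
  fun z => by
    have hz := congrFun h z
    simp only [vecMul, dotProduct, Matrix.map_apply, matA, Complex.ofReal_add, mul_add,
      Finset.sum_add_distrib, sum_mul_attachMatrix, Pi.smul_apply, smul_eq_mul] at hz
    rw [← hz, add_left_inj, Finset.sum_eq_single (F.perm z) (fun x _ hx => by simp [hx])
      (by simp), if_pos rfl, mul_comm]

theorem controllable [Fintype U] : Controllable F.matA F.matB :=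
  controllable_of_left_eigenvector_eq_zero _ _ fun _ y hA hB =>
    eq_zero_of_isLeftEigen (F.isLeftEigen_of_vecMul hA) fun u => by
      simpa [vecMul, dotProduct, matB, sum_mul_attachMatrix] using congrFun hB u

end Realization

noncomputable def ofPerm {Q U : Type*} [Finite Q] (σ : Perm Q) (ht : Q → ℕ) (par : Q → Q ⊕ U)
    (hpar : ∀ x z, par x = Sum.inl z → ht z < ht x) :
    CycleForest Q U (Quotient (Perm.SameCycle.setoid σ)) :=
  let head (a : Quotient (Perm.SameCycle.setoid σ)) : Q :=
    Function.argminOn ht {x | Quotient.mk _ x = a} a.exists_rep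
  { perm := σ
    cycle := Quotient.mk _
    weight := fun a => (Finite.equivFin _ a : ℝ) + 1
    head := head
    parent := fun a => par (head a)
    rank := fun a => ht (head a)
    cycle_eq_iff := fun _ _ => Quotient.eq
    weight_pos := fun _ => by positivity
    weight_injective := fun _ _ h => (Finite.equivFin _).injective (Fin.ext (by simpa using h))
    cycle_head := fun a => Function.argminOn_mem ht {x | Quotient.mk _ x = a} a.exists_rep
    rank_lt := fun _ z h =>
      (Function.argminOn_le ht {x | Quotient.mk _ x = Quotient.mk _ z} rfl).trans_lt (hpar _ z h) }

end CycleForest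

theorem exists_controllable_of_perm {Q U : Type*} [Fintype Q] [DecidableEq Q] [Fintype U]
    [DecidableEq U] {Ab : Matrix Q Q Bool} {Bb : Matrix Q U Bool} (σ : Perm Q)
    (hσ : ∀ x, Ab (σ x) x = true) (ht : Q → ℕ) (par : Q → Q ⊕ U)
    (hedge : ∀ x, sysDigraphRel Ab Bb (par x) (Sum.inl x))
    (hlt : ∀ x z, par x = Sum.inl z → ht z < ht x) :
    ∃ (A : Matrix Q Q ℝ) (B : Matrix Q U ℝ), (∀ i j, A i j ≠ 0 → Ab i j = true) ∧
      (∀ i k, B i k ≠ 0 → Bb i k = true) ∧ Controllable A B := by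
  let F := CycleForest.ofPerm σ ht par hlt
  have : Fintype (Quotient (Perm.SameCycle.setoid σ)) := Fintype.ofFinite _
  have hparent (a) : F.parent a = par (F.head a) := rfl
  refine ⟨F.matA, F.matB, fun x z h => ?_, fun x u h => ?_, F.controllable⟩
  · rcases F.eq_or_exists_of_matA_ne_zero h with rfl | ⟨a, rfl, ha⟩
    · exact hσ z
    · simpa [sysDigraphRel, ← hparent, ha] using hedge (F.head a)
  · obtain ⟨a, rfl, ha⟩ := F.exists_of_attachMatrix_ne_zero h
    simpa [sysDigraphRel, ← hparent, ha] using hedge (F.head a)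

section Reachability

variable {X U : Type*}

/-- Some path from an input ends at `x` and passes through at most `k` states. -/
def ReachableWithin (Ab : Matrix X X Bool) (Bb : Matrix X U Bool) : ℕ → X → Prop
  | 0, _ => False
  | k + 1, x => ∃ v, sysDigraphRel Ab Bb v (Sum.inl x) ∧
      ∀ z, v = Sum.inl z → ReachableWithin Ab Bb k z

theorem InputReachable.exists_reachableWithin {Ab : Matrix X X Bool} {Bb : Matrix X U Bool}
    {x : X} (h : InputReachable Ab Bb x) : ∃ k, ReachableWithin Ab Bb k x := by
  obtain ⟨u, hu⟩ := h
  suffices ∀ w, ReflTransGen (sysDigraphRel Ab Bb) (Sum.inr u) w →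
      ∀ x, w = Sum.inl x → ∃ k, ReachableWithin Ab Bb k x from this _ hu x rfl
  intro w hw
  induction hw with
  | refl => simp
  | @tail v w _ hvw ih =>
    rintro x rfl
    rcases v with z | u'
    · obtain ⟨k, hk⟩ := ih z rfl
      exact ⟨k + 1, _, hvw, fun z' hz' => Sum.inl.inj hz' ▸ hk⟩
    · exact ⟨1, _, hvw, by simp⟩

theorem exists_parent_of_inputReachable {Ab : Matrix X X Bool} {Bb : Matrix X U Bool}
    (h : ∀ x, InputReachable Ab Bb x) :
    ∃ (ht : X → ℕ) (par : X → X ⊕ U), (∀ x, sysDigraphRel Ab Bb (par x) (Sum.inl x)) ∧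
      ∀ x z, par x = Sum.inl z → ht z < ht x := by
  classical
  have hk (x : X) : ∃ k, ReachableWithin Ab Bb (k + 1) x := by
    obtain ⟨_ | k, hk⟩ := (h x).exists_reachableWithin
    exacts [hk.elim, ⟨k, hk⟩]
  have hpar (x : X) : ∃ v, sysDigraphRel Ab Bb v (Sum.inl x) ∧
      ∀ z, v = Sum.inl z → Nat.find (hk z) < Nat.find (hk x) := by
    obtain ⟨v, hv, hz⟩ := Nat.find_spec (hk x)
    refine ⟨v, hv, fun z hvz => ?_⟩
    have hzk := hz z hvz
    rcases hn : Nat.find (hk x) with _ | n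
    · rw [hn] at hzk
      exact hzk.elim
    · rw [hn] at hzk
      exact Nat.lt_succ_of_le (Nat.find_min' _ hzk)
  choose par hedge hlt using hpar
  exact ⟨_, par, hedge, hlt⟩

theorem isSCC_setOf_reflTransGen (R : X → X → Prop) (w : X) :
    IsSCC R {s | ReflTransGen R w s ∧ ReflTransGen R s w} :=
  ⟨⟨w, .refl, .refl⟩, fun _ ha _ hb => ha.2.trans hb.1, fun _ h => h w ⟨.refl, .refl⟩⟩

/-- Take the component of an ancestor of `v` with fewest ancestors. -/
theorem exists_nonTopLinked_reflTransGen [Finite X] (R : X → X → Prop) (v : X) :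
    ∃ S, IsSCC R S ∧ NonTopLinked R S ∧ ∀ s ∈ S, ReflTransGen R s v := by
  let anc (x : X) : Set X := {a | ReflTransGen R a x}
  obtain ⟨w, hwv, hmin⟩ := Set.exists_min_image (anc v) (fun x => (anc x).ncard)
    (Set.toFinite _) ⟨v, .refl⟩
  refine ⟨_, isSCC_setOf_reflTransGen R w, fun a b hab hb => ?_, fun s hs => hs.2.trans hwv⟩
  have haw : ReflTransGen R a w := ReflTransGen.head hab hb.2
  by_contra ha
  have hsub : anc a ⊂ anc w := ⟨fun c hc => hc.trans haw, fun hsub => ha ⟨hsub .refl, haw⟩⟩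
  exact (Set.ncard_lt_ncard hsub).not_ge (hmin a (haw.trans hwv))

theorem inputReachable_of_forall_nonTopLinked [Finite X] [Finite U] {Ab : Matrix X X Bool}
    {Bb : Matrix X U Bool}
    (h : ∀ S, IsSCC (sysDigraphRel Ab Bb) S → NonTopLinked (sysDigraphRel Ab Bb) S →
      ∀ v ∈ S, ∃ u, v = Sum.inr u) (x : X) : InputReachable Ab Bb x := by
  obtain ⟨S, hS, hnt, hreach⟩ :=
    exists_nonTopLinked_reflTransGen (sysDigraphRel Ab Bb) (Sum.inl x)
  obtain ⟨s, hs⟩ := hS.1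
  obtain ⟨u, rfl⟩ := h S hS hnt s hs
  exact ⟨u, hreach _ hs⟩

end Reachability

theorem structurallyControllable_of_perm_of_inputReachable {Q U : Type*} [Fintype Q]
    [DecidableEq Q] [Fintype U] [DecidableEq U] {Ab : Matrix Q Q Bool} {Bb : Matrix Q U Bool}
    (σ : Perm Q) (hσ : ∀ x, Ab (σ x) x = true) (hreach : ∀ x, InputReachable Ab Bb x) :
    StructurallyControllable Ab Bb := by
  obtain ⟨ht, par, hedge, hlt⟩ := exists_parent_of_inputReachable hreach
  obtain ⟨A, B, hA, hB, hc⟩ := exists_controllable_of_perm σ hσ ht par hedge hlt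
  exact structurallyControllable_of_controllable hA hB hc

section Matching

variable {α β : Type*} {E : α → β → Prop} {M N : Set (α × β)}

theorem IsMatching.mono {E' : α → β → Prop} (hE : ∀ a b, E a b → E' a b) (hM : IsMatching E M) :
    IsMatching E' M :=
  ⟨fun e he => hE _ _ (hM.1 e he), hM.2⟩

theorem IsMatching.union (hM : IsMatching E M) (hN : IsMatching E N)
    (hl : ∀ e ∈ M, e.1 ∈ leftUnmatched N) (hr : ∀ e ∈ M, e.2 ∈ rightUnmatched N) :
    IsMatching E (M ∪ N) := by
  refine ⟨fun e he => he.elim (hM.1 e) (hN.1 e), fun e he f hf h => ?_, fun e he f hf h => ?_⟩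
  · rcases he with he | he <;> rcases hf with hf | hf
    exacts [hM.2.1 e he f hf h, (hl e he f hf h.symm).elim, (hl f hf e he h).elim,
      hN.2.1 e he f hf h]
  · rcases he with he | he <;> rcases hf with hf | hf
    exacts [hM.2.2 e he f hf h, (hr e he f hf h.symm).elim, (hr f hf e he h).elim,
      hN.2.2 e he f hf h]

theorem exists_perm_of_isMatching [Finite α] {E : α → α → Prop} {M : Set (α × α)}
    (hM : IsMatching E M) (hcover : ∀ a, a ∉ leftUnmatched M) : ∃ σ : Perm α, ∀ a, E a (σ a) := by
  have hpartner (a : α) : ∃ b, (a, b) ∈ M := by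
    obtain ⟨e, he, hea⟩ := not_forall₂.mp (hcover a)
    exact ⟨e.2, not_not.mp hea ▸ he⟩
  choose g hg using hpartner
  have hinj : Function.Injective g := fun a a' h =>
    congrArg Prod.fst (hM.2.2 _ (hg a) _ (hg a') h)
  exact ⟨Equiv.ofBijective g (Finite.injective_iff_bijective.mp hinj), fun a => hM.1 _ (hg a)⟩

end Matching

section Interconnection

variable {r : ℕ} {n p : Fin r → ℕ} (A : ∀ i, Matrix (Fin (n i)) (Fin (n i)) Bool)
  (B : ∀ i, Matrix (Fin (n i)) (Fin (p i)) Bool) (E : ∀ i j, Matrix (Fin (n i)) (Fin (n j)) Bool)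

theorem interA_mk_mk (i : Fin r) (a b : Fin (n i)) : interA A E ⟨i, a⟩ ⟨i, b⟩ = A i a b := by
  simp [interA]

theorem interA_of_ne {q q' : Σ i, Fin (n i)} (h : q'.1 ≠ q.1) :
    interA A E q q' = E q.1 q'.1 q.2 q'.2 :=
  dif_neg h

theorem interB_mk_mk (i : Fin r) (a : Fin (n i)) (k : Fin (p i)) :
    interB B ⟨i, a⟩ ⟨i, k⟩ = B i a k := by
  simp [interB]

variable {A B E}

theorem InputReachable.interconnect {j : Fin r} {x : Fin (n j)}
    (h : InputReachable (A j) (B j) x) : InputReachable (interA A E) (interB B) ⟨j, x⟩ := by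
  obtain ⟨u, hu⟩ := h
  refine ⟨⟨j, u⟩, ReflTransGen.lift (p := sysDigraphRel (interA A E) (interB B))
    (Sum.map (Sigma.mk j) (Sigma.mk j)) ?_ _ _ hu⟩
  rintro (a | k) (b | k') hab <;>
    simp_all [sysDigraphRel, Function.onFun, interA_mk_mk, interB_mk_mk]

def blockMatching (M : ∀ i, Set (Fin (n i) × Fin (n i))) :
    Set ((Σ i, Fin (n i)) × Σ i, Fin (n i)) :=
  ⋃ i, Prod.map (Sigma.mk i) (Sigma.mk i) '' M i

theorem mem_blockMatching {M : ∀ i, Set (Fin (n i) × Fin (n i))}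
    {e : (Σ i, Fin (n i)) × Σ i, Fin (n i)} :
    e ∈ blockMatching M ↔ ∃ i a b, (a, b) ∈ M i ∧ e = (⟨i, a⟩, ⟨i, b⟩) := by
  simp [blockMatching, eq_comm]

variable {M : ∀ i, Set (Fin (n i) × Fin (n i))} {M' : Set ((Σ i, Fin (n i)) × Σ i, Fin (n i))}

theorem isMatching_blockMatching (hM : ∀ i, IsMatching (stateBipEdge (A i)) (M i)) :
    IsMatching (stateBipEdge (interA A E)) (blockMatching M) := by
  refine ⟨fun e he => ?_, fun e he f hf h => ?_, fun e he f hf h => ?_⟩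
  · obtain ⟨i, a, b, hab, rfl⟩ := mem_blockMatching.mp he
    simpa [stateBipEdge, interA_mk_mk] using (hM i).1 _ hab
  all_goals
    obtain ⟨i, a, b, hab, rfl⟩ := mem_blockMatching.mp he
    obtain ⟨i', a', b', hab', rfl⟩ := mem_blockMatching.mp hf
    obtain ⟨rfl, h⟩ := Sigma.mk.inj_iff.mp h
    cases eq_of_heq h
  · cases (hM i).2.1 _ hab _ hab' rfl
    rfl
  · cases (hM i).2.2 _ hab _ hab' rfl
    rfl

theorem stateBipEdge_interA_of_crossEdge {l k : Σ i, Fin (n i)} (h : crossEdge E M l k) :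
    stateBipEdge (interA A E) l k := by
  rw [stateBipEdge, interA_of_ne A E (Ne.symm h.1)]
  exact h.2.2.2

theorem fst_mem_leftUnmatched_of_mem_blockMatching (hM' : IsMatching (crossEdge E M) M')
    {e : (Σ i, Fin (n i)) × Σ i, Fin (n i)} (he : e ∈ blockMatching M) :
    e.1 ∈ leftUnmatched M' := by
  obtain ⟨i, a, b, hab, rfl⟩ := mem_blockMatching.mp he
  rintro ⟨l, k⟩ hf (rfl : l = ⟨i, a⟩)
  exact (hM'.1 _ hf).2.1 _ hab rfl

theorem snd_mem_rightUnmatched_of_mem_blockMatching (hM' : IsMatching (crossEdge E M) M')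
    {e : (Σ i, Fin (n i)) × Σ i, Fin (n i)} (he : e ∈ blockMatching M) :
    e.2 ∈ rightUnmatched M' := by
  obtain ⟨i, a, b, hab, rfl⟩ := mem_blockMatching.mp he
  rintro ⟨l, k⟩ hf (rfl : k = ⟨i, b⟩)
  exact (hM'.1 _ hf).2.2.1 _ hab rfl

theorem notMem_leftUnmatched_union
    (hcover : ∀ q : Σ i, Fin (n i), q.2 ∈ leftUnmatched (M q.1) → q ∉ leftUnmatched M')
    (q : Σ i, Fin (n i)) : q ∉ leftUnmatched (blockMatching M ∪ M') := by
  intro hq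
  by_cases h : q.2 ∈ leftUnmatched (M q.1)
  · exact hcover q h fun e he => hq e (Or.inr he)
  · obtain ⟨⟨a, b⟩, hab, ha⟩ := not_forall₂.mp h
    obtain rfl : a = q.2 := not_not.mp ha
    exact hq _ (Or.inl (mem_blockMatching.mpr ⟨q.1, q.2, b, hab, rfl⟩)) rfl

theorem exists_perm_of_matchings (hM : ∀ i, IsMatching (stateBipEdge (A i)) (M i))
    (hM' : IsMatching (crossEdge E M) M')
    (hcover : ∀ q : Σ i, Fin (n i), q.2 ∈ leftUnmatched (M q.1) → q ∉ leftUnmatched M') :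
    ∃ σ : Perm (Σ i, Fin (n i)), ∀ q, interA A E (σ q) q = true :=
  exists_perm_of_isMatching ((isMatching_blockMatching hM).union
      (hM'.mono fun _ _ => stateBipEdge_interA_of_crossEdge)
      (fun _ => fst_mem_leftUnmatched_of_mem_blockMatching hM')
      (fun _ => snd_mem_rightUnmatched_of_mem_blockMatching hM'))
    (notMem_leftUnmatched_union hcover)

end Interconnection

theorem interconnected_struct_controllable_of_matchings
    {r : ℕ} {n p : Fin r → ℕ}
    (A : ∀ i, Matrix (Fin (n i)) (Fin (n i)) Bool)
    (B : ∀ i, Matrix (Fin (n i)) (Fin (p i)) Bool)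
    (E : ∀ i j, Matrix (Fin (n i)) (Fin (n j)) Bool)
    (M : ∀ i, Set (Fin (n i) × Fin (n i)))
    (hmax : ∀ i, IsMaxMatching (stateBipEdge (A i)) (M i))
    (hscc : ∀ j : Fin r, ∀ S : Set (Fin (n j) ⊕ Fin (p j)),
      IsSCC (sysDigraphRel (A j) (B j)) S → NonTopLinked (sysDigraphRel (A j) (B j)) S →
      ∀ v ∈ S, ∃ u : Fin (p j), v = Sum.inr u)
    (hperf : ∃ M' : Set ((Σ i, Fin (n i)) × (Σ i, Fin (n i))),
      IsMatching (crossEdge E M) M' ∧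
      (∀ q : Σ i, Fin (n i), q.2 ∈ leftUnmatched (M q.1) → q ∉ leftUnmatched M') ∧
      (∀ q : Σ i, Fin (n i), q.2 ∈ rightUnmatched (M q.1) → q ∉ rightUnmatched M')) :
    StructurallyControllable (interA A E) (interB B) := by
  obtain ⟨M', hM', hcover, -⟩ := hperf
  obtain ⟨σ, hσ⟩ := exists_perm_of_matchings (fun i => (hmax i).1) hM' hcover
  exact structurallyControllable_of_perm_of_inputReachable σ hσ fun q =>
    (inputReachable_of_forall_nonTopLinked (hscc q.1) q.2).interconnect
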